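/- arXiv:1910.06743 — 4 statements merged into one kernel-verified Lean document; each statement's English description precedes it below -/
import Mathlib

section
/- There do not exist positive integers k, m, r with r ≥ 2, r not a perfect square, k ≤ 49, m ≥ 2 such that r·m² − m + 2 − k² ≤ 0 and k/(r·m) < 1/(√r + δ(r)), where δ(2)=0.031, δ(3)=0.018, δ(5)=0.014, δ(6)=0.022, δ(7)=0.011, δ(8)=0.012, and δ(r)=0.013 for all other r ≥ 2 that are not perfect squares. -/
/-- The constant δ(r) from Theorem 3.1. -/
noncomputable def delta (r : ℕ) : ℝ :=
  if r = 2 then 0.031 else if r = 3 then 0.018 else if r = 5 then 0.014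
  else if r = 6 then 0.022 else if r = 7 then 0.011 else if r = 8 then 0.012
  else 0.013

def dnat (r : ℕ) : ℕ :=
  if r = 2 then 31 else if r = 3 then 18 else if r = 5 then 14
  else if r = 6 then 22 else if r = 7 then 11 else if r = 8 then 12
  else 13

lemma delta_eq (r : ℕ) : delta r = (dnat r : ℝ) / 1000 := by
  unfold delta dnat; split_ifs <;> norm_num

lemma delta_ge (r : ℕ) : (0.011 : ℝ) ≤ delta r := by
  unfold delta; split_ifs <;> norm_num

/-- Real-analytic bounds: the submaximality and Xu inequalities force
    `2 < M`, `M ≤ 32`, `R < 47`. -/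
lemma real_bounds (R M K S D : ℝ) (hR : 2 ≤ R) (hM : 2 ≤ M) (hK : 1 ≤ K)
    (hS0 : 0 ≤ S) (hS2 : S ^ 2 = R) (hS14 : 1.4 ≤ S) (hD : 0.011 ≤ D)
    (h1 : K * (S + D) < R * M) (hk2 : R * M ^ 2 + 2 ≤ K ^ 2 + M) :
    2 < M ∧ M < 33 ∧ R < 47 := by
  have hKSD : 0 ≤ K * (S + D) := by positivity
  have h2' : (K * (S + D)) * (K * (S + D)) < (R * M) * (R * M) :=
    mul_self_lt_mul_self hKSD h1
  have h2 : K ^ 2 * R + 2 * S * D * K ^ 2 + D ^ 2 * K ^ 2 < (R * M) * (R * M) := by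
    have hexp : (K * (S + D)) * (K * (S + D))
        = K ^ 2 * S ^ 2 + 2 * S * D * K ^ 2 + D ^ 2 * K ^ 2 := by ring
    rw [hexp, hS2] at h2'
    linarith [h2']
  have h3 : (R * M) * (R * M) ≤ R * K ^ 2 + R * (M - 2) := by
    have h := mul_le_mul_of_nonneg_left hk2 (by linarith : (0:ℝ) ≤ R)
    have hexp : R * (R * M ^ 2 + 2) = (R * M) * (R * M) + 2 * R := by ring
    nlinarith [h]
  have hkey : 2 * S * D * K ^ 2 < R * (M - 2) := by
    have hDp : (0:ℝ) ≤ D ^ 2 * K ^ 2 := by positivity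
    linarith [h2, h3, hDp]
  -- 2 < M
  have hM2 : 2 < M := by
    by_contra hcon
    push_neg at hcon
    have hle : R * (M - 2) ≤ 0 :=
      mul_nonpos_of_nonneg_of_nonpos (by linarith) (by linarith)
    have hpos : (0:ℝ) ≤ 2 * S * D * K ^ 2 := by positivity
    linarith
  -- 2 S D ≥ 0.0308
  have h2sD : (0.0308:ℝ) ≤ 2 * S * D := by
    have h := mul_nonneg (by linarith : (0:ℝ) ≤ S - 1.4) (by linarith : (0:ℝ) ≤ D - 0.011)
    linarith [h, hS14, hD]
  have hkk : R * M ^ 2 - M + 2 ≤ K ^ 2 := by linarith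
  have hkey2 : (0.0308:ℝ) * (R * M ^ 2 - M + 2) < R * (M - 2) := by
    have hprod : (0:ℝ) ≤ (2 * S * D - 0.0308) * K ^ 2 :=
      mul_nonneg (by linarith) (sq_nonneg K)
    linarith [hkey, hkk, hprod]
  -- M < 33
  have hM32 : M < 33 := by
    by_contra hcon
    push_neg at hcon
    have p1 : (0:ℝ) ≤ (M - 33) * R * M :=
      mul_nonneg (mul_nonneg (by linarith) (by linarith)) (by linarith)
    have p2 : (0:ℝ) ≤ (R - 2) * M := mul_nonneg (by linarith) (by linarith)
    linarith [hkey2, p1, p2]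
  -- R < 47
  have h5 : (0.022:ℝ) * S * K ^ 2 < R * (M - 2) := by
    have hprod : (0:ℝ) ≤ (2 * D - 0.022) * S * K ^ 2 :=
      mul_nonneg (mul_nonneg (by linarith) hS0) (sq_nonneg K)
    linarith [hkey, hprod]
  have h6 : (5/6:ℝ) * (R * M ^ 2) ≤ K ^ 2 := by
    have p1 : (0:ℝ) ≤ (R - 2) * M ^ 2 := mul_nonneg (by linarith) (sq_nonneg M)
    linarith [hkk, p1, sq_nonneg (M - 3/2)]
  have h7 : R * (M - 2) ≤ R * M ^ 2 / 8 := by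
    have h := mul_le_mul_of_nonneg_left
      (by linarith [sq_nonneg (M - 4)] : 8 * (M - 2) ≤ M ^ 2) (by linarith : (0:ℝ) ≤ R)
    linarith [h]
  have h8 : (0.022:ℝ) * S * ((5/6) * (R * M ^ 2)) ≤ 0.022 * S * K ^ 2 :=
    mul_le_mul_of_nonneg_left h6 (by positivity)
  have hSle : S < 75/11 := by
    by_contra hcon
    push_neg at hcon
    have hRM2 : (0:ℝ) ≤ R * M ^ 2 := mul_nonneg (by linarith) (sq_nonneg M)
    have hp : (0:ℝ) ≤ (S - 75/11) * (R * M ^ 2) := mul_nonneg (by linarith) hRM2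
    linarith [h5, h7, h8, hp]
  have : R < 47 := by
    have h := mul_self_lt_mul_self hS0 hSle
    nlinarith [h]
  exact ⟨hM2, hM32, this⟩

/-- Converting the real irrational inequality into an integer one. -/
lemma real_rat (R M K S Dn : ℝ) (hK : 1 ≤ K) (hS14 : 1.4 ≤ S) (hS2 : S ^ 2 = R)
    (hDn : 0 ≤ Dn) (h1 : K * (S + Dn / 1000) < R * M) :
    Dn * K < 1000 * (R * M) ∧
      1000000 * (K * K * R) < (1000 * (R * M) - Dn * K) ^ 2 := by
  have hKS : (1.4:ℝ) ≤ K * S := by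
    have h := mul_nonneg (by linarith : (0:ℝ) ≤ K - 1) (by linarith : (0:ℝ) ≤ S - 1.4)
    nlinarith [h]
  have hlt : K * S < R * M - K * (Dn / 1000) := by nlinarith [h1]
  have hdk : Dn * K < 1000 * (R * M) := by
    have hKDn : 0 ≤ K * (Dn / 1000) := by positivity
    nlinarith [hlt, hKS, hKDn]
  refine ⟨hdk, ?_⟩
  have hsq : (K * S) * (K * S) < (R * M - K * (Dn / 1000)) * (R * M - K * (Dn / 1000)) :=
    mul_self_lt_mul_self (by linarith) hlt
  have ha : (K * S) * (K * S) = K * K * S ^ 2 := by ring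
  rw [ha, hS2] at hsq
  nlinarith [hsq]

set_option maxRecDepth 10000 in
set_option synthInstance.maxSize 5000 in
set_option maxHeartbeats 4000000 in
lemma key : ∀ m < 33, ∀ r < 47, 2 ≤ m ∧ 2 ≤ r ∧ r*m*m ≤ 2399 + m →
    ∀ k < 50, r*m*m + 2 ≤ k*k + m ∧ dnat r * k < 1000*(r*m) →
    ¬ (1000000*(k*k*r) < (1000*(r*m) - dnat r * k)^2) := by decide

theorem stmt_2 :
    ¬ ∃ (k m r : ℕ), 0 < k ∧ 0 < m ∧ 0 < r ∧ 2 ≤ r ∧ k ≤ 49 ∧ 2 ≤ m ∧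
      ¬ IsSquare r ∧
      ((r : ℤ) * m ^ 2 - m + 2 - k ^ 2 ≤ 0) ∧
      (k : ℝ) / (r * m) < 1 / (Real.sqrt r + delta r) := by
  rintro ⟨k, m, r, hk, hm, hr, hr2, hk49, hm2, _hsq, hZ, hR⟩
  have hrR : (2:ℝ) ≤ (r:ℝ) := by exact_mod_cast hr2
  have hmR : (2:ℝ) ≤ (m:ℝ) := by exact_mod_cast hm2
  have hkR : (1:ℝ) ≤ (k:ℝ) := by exact_mod_cast hk
  have hs0 : 0 ≤ Real.sqrt r := Real.sqrt_nonneg _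
  have hs2 : (Real.sqrt r) ^ 2 = (r:ℝ) := Real.sq_sqrt (by positivity)
  have hs14 : (1.4:ℝ) ≤ Real.sqrt r := by nlinarith [hrR, hs0, hs2]
  have hD011 : (0.011:ℝ) ≤ delta r := delta_ge r
  have hrm0 : (0:ℝ) < (r:ℝ) * m := by positivity
  have hsD0 : (0:ℝ) < Real.sqrt r + delta r := by linarith
  have h1 : (k:ℝ) * (Real.sqrt r + delta r) < (r:ℝ) * m := by
    rw [div_lt_div_iff₀ hrm0 hsD0] at hR
    linarith
  have hk2 : (r:ℝ) * (m:ℝ) ^ 2 + 2 ≤ (k:ℝ) ^ 2 + m := by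
    have h : (r:ℤ) * m ^ 2 + 2 ≤ (k:ℤ) ^ 2 + m := by linarith
    exact_mod_cast h
  -- real bounds
  obtain ⟨hM2, hM32, hR47⟩ := real_bounds (r:ℝ) (m:ℝ) (k:ℝ) (Real.sqrt r) (delta r)
    hrR hmR hkR hs0 hs2 hs14 hD011 h1 hk2
  have hm32 : m < 33 := by exact_mod_cast hM32
  have hr46 : r < 47 := by exact_mod_cast hR47
  -- rational inequalities
  have hDn0 : (0:ℝ) ≤ (dnat r : ℝ) := by positivity
  have h1' : (k:ℝ) * (Real.sqrt r + (dnat r : ℝ) / 1000) < (r:ℝ) * m := by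
    rw [← delta_eq]; exact h1
  obtain ⟨hdkR, hratR⟩ := real_rat (r:ℝ) (m:ℝ) (k:ℝ) (Real.sqrt r) (dnat r : ℝ)
    hkR hs14 hs2 hDn0 h1'
  have hdk : dnat r * k < 1000 * (r * m) := by exact_mod_cast (by push_cast; linarith : ((dnat r * k : ℕ) : ℝ) < ((1000 * (r * m) : ℕ) : ℝ))
  have hrat : 1000000 * (k * k * r) < (1000 * (r * m) - dnat r * k) ^ 2 := by
    have hcast : ((1000 * (r * m) - dnat r * k : ℕ) : ℝ)
        = 1000 * ((r:ℝ) * m) - (dnat r : ℝ) * k := by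
      rw [Nat.cast_sub hdk.le]; push_cast; ring
    have hfin : ((1000000 * (k * k * r) : ℕ) : ℝ)
        < ((1000 * (r * m) - dnat r * k : ℕ) : ℝ) ^ 2 := by
      rw [hcast]; push_cast; linarith [hratR]
    exact_mod_cast hfin
  -- integer arithmetic
  have hnat : r * m * m + 2 ≤ k * k + m := by
    have h : (r:ℤ) * m ^ 2 + 2 ≤ (k:ℤ) ^ 2 + m := by linarith
    zify; nlinarith [h]
  have hguard : r * m * m ≤ 2399 + m := by
    have hkk : k * k ≤ 2401 := Nat.mul_le_mul hk49 hk49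
    omega
  exact key m (by omega) r (by omega) ⟨hm2, hr2, hguard⟩ k (by omega) ⟨hnat, hdk⟩ hrat
end

section
/- There do not exist positive integers k, m, M, r with r ≥ 2, k ≤ 49, m > M > 1, r not a perfect square, such that (r−1)·m² + M² − M + 2 − k² ≤ 0 and k/((r−1)·m + M) < 1/(√r + δ(r)), with δ as specified: δ(2)=0.031, δ(3)=0.018, δ(5)=0.014, δ(6)=0.022, δ(7)=0.011, δ(8)=0.012, δ(r)=0.013 otherwise. -/
lemma dnat_le (r : ℕ) : dnat r ≤ 31 := by
  unfold dnat; split_ifs <;> norm_num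

lemma dnat_cast (r : ℕ) : (dnat r : ℝ) = 1000 * delta r := by
  unfold dnat delta; split_ifs <;> norm_num

lemma delta_pos (r : ℕ) : 0 < delta r := by
  unfold delta; split_ifs <;> norm_num

/-- poor man's search for the largest s ≤ f with s*s ≤ n -/
def isq : ℕ → ℕ → ℕ
  | 0, _ => 0
  | f+1, n => if (f+1)*(f+1) ≤ n then f+1 else isq f n

lemma isq_sq : ∀ f n, isq f n * isq f n ≤ n := by
  intro f
  induction f with
  | zero => intro n; simp [isq]
  | succ f ih =>
    intro n
    simp only [isq]
    split
    · assumption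
    · exact ih n

/-- search upward from s for the first k with S ≤ k*k -/
def kfind : ℕ → ℕ → ℕ → ℕ
  | 0, s, _ => s
  | f+1, s, S => if S ≤ s*s then s else kfind f (s+1) S

lemma kfind_le : ∀ f s S k, s ≤ k → S ≤ k*k → kfind f s S ≤ k := by
  intro f
  induction f with
  | zero => intro s S k h _; simpa [kfind] using h
  | succ f ih =>
    intro s S k h hS
    simp only [kfind]
    split
    · exact h
    · rename_i hns
      rcases Nat.eq_or_lt_of_le h with rfl | h'
      · exact absurd hS hns
      · exact ih (s+1) S k h' hS

lemma kfind_sq : ∀ f s S, S ≤ (s+f)*(s+f) → S ≤ kfind f s S * kfind f s S := by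
  intro f
  induction f with
  | zero => intro s S h; simpa [kfind] using h
  | succ f ih =>
    intro s S h
    simp only [kfind]
    split
    · assumption
    · have e : s + (f+1) = s+1+f := by omega
      rw [e] at h
      exact ih (s+1) S h

def checkB : Bool :=
  (List.range 266).all fun a =>
    (List.range 49).all fun m =>
      if (a+1)*(m*m) > 2399 then true else
      (List.range m).all fun M =>
        if M < 2 then true else
        let S := (a+1)*(m*m) + M*M - M + 2
        if S > 2401 then true else
        let d := dnat (a+2)
        let A := (a+1)*m + M
        let k := kfind 50 (isq 16 (a+1) * m) S
        Nat.ble ((1000*A)^2 + (k*d)^2) (1000000*(a+2)*k^2 + 2000*A*k*d)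

set_option maxHeartbeats 40000000 in
set_option maxRecDepth 10000 in
theorem checkB_true : checkB = true := by decide

theorem main_nat (r m M k : ℕ) (hr : 2 ≤ r) (hM : 2 ≤ M) (hMm : M < m) (hk : k ≤ 49)
    (h : (r-1)*(m*m) + M*M - M + 2 ≤ k*k) :
    (1000*((r-1)*m+M))^2 + (k * dnat r)^2 ≤
      1000000*r*k^2 + 2000*((r-1)*m+M)*k*(dnat r) := by
  obtain ⟨a, rfl⟩ : ∃ a, r = a+2 := ⟨r-2, by omega⟩
  have e1 : a+2-1 = a+1 := by omega
  rw [e1] at h ⊢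
  -- basic bounds
  have hMM : M ≤ M*M := Nat.le_mul_of_pos_left M (by omega)
  have hkk : k*k ≤ 2401 := Nat.mul_le_mul hk hk
  have hP2399 : (a+1)*(m*m) ≤ 2399 := by omega
  have hm3 : 3 ≤ m := by omega
  have h9 : 9 ≤ m*m := Nat.mul_le_mul hm3 hm3
  have h9' : (a+1)*9 ≤ (a+1)*(m*m) := Nat.mul_le_mul_left (a+1) h9
  have ha266 : a < 266 := by omega
  have hmm2399 : m*m ≤ 2399 :=
    le_trans (Nat.le_mul_of_pos_left (m*m) (Nat.succ_pos a)) hP2399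
  have hm49 : m < 49 := by
    by_contra hc
    push_neg at hc
    have := Nat.mul_le_mul hc hc
    omega
  have hS2401 : (a+1)*(m*m) + M*M - M + 2 ≤ 2401 := by omega
  -- extract from checkB
  have hb := checkB_true
  unfold checkB at hb
  rw [List.all_eq_true] at hb
  have h1 := hb a (List.mem_range.mpr ha266)
  try dsimp only at h1
  rw [List.all_eq_true] at h1
  have h2 := h1 m (List.mem_range.mpr hm49)
  try dsimp only at h2
  rw [if_neg (by omega : ¬ (a+1)*(m*m) > 2399)] at h2
  rw [List.all_eq_true] at h2
  have h3 := h2 M (List.mem_range.mpr hMm)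
  try dsimp only at h3
  rw [if_neg (by omega : ¬ M < 2)] at h3
  rw [if_neg (by omega : ¬ (a+1)*(m*m) + M*M - M + 2 > 2401)] at h3
  have hle' := Nat.le_of_ble_eq_true h3
  have hle := hle'
  -- relate the found k0 to k
  set S := (a+1)*(m*m) + M*M - M + 2 with hSdef
  set s := isq 16 (a+1) * m with hsdef
  set k0 := kfind 50 s S with hk0def
  have hss : s*s ≤ S := by
    have e2 : s*s = (isq 16 (a+1) * isq 16 (a+1)) * (m*m) := by rw [hsdef]; ring
    have e3 : (isq 16 (a+1) * isq 16 (a+1)) * (m*m) ≤ (a+1)*(m*m) :=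
      Nat.mul_le_mul_right (m*m) (isq_sq 16 (a+1))
    omega
  have hsk : s ≤ k := by
    by_contra hc
    push_neg at hc
    have h4 : k+1 ≤ s := hc
    have h5 : (k+1)*(k+1) ≤ s*s := Nat.mul_le_mul h4 h4
    have h6 : k*k < (k+1)*(k+1) := by nlinarith
    omega
  have hk0k : k0 ≤ k := kfind_le 50 s S k hsk h
  clear hk0def hsdef hSdef h hle' hb h1 h2 h3
  clear_value k0 s S
  -- monotone step, over ℤ
  have hd31 : dnat (a+2) ≤ 31 := dnat_le _
  zify at hle hk0k hd31 ⊢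
  have h0 : (0:ℤ) ≤ (k0:ℤ) := Int.natCast_nonneg k0
  have h0' : (0:ℤ) ≤ (dnat (a+2):ℤ) := Int.natCast_nonneg _
  have hk2 : (k0:ℤ)^2 ≤ (k:ℤ)^2 := by
    have := mul_le_mul hk0k hk0k h0 (le_trans h0 hk0k)
    nlinarith only [this]
  have hC : (0:ℤ) ≤ 1000000*((a:ℤ)+2) - (dnat (a+2):ℤ)^2 := by
    have := mul_le_mul hd31 hd31 h0' (by norm_num)
    have ha0 : (0:ℤ) ≤ (a:ℤ) := Int.natCast_nonneg a
    nlinarith only [this, ha0]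
  have t1 : (1000000*((a:ℤ)+2) - (dnat (a+2):ℤ)^2) * (k0:ℤ)^2 ≤
      (1000000*((a:ℤ)+2) - (dnat (a+2):ℤ)^2) * (k:ℤ)^2 :=
    mul_le_mul_of_nonneg_left hk2 hC
  have t2 : (2000*(((a:ℤ)+1)*m+M)*(dnat (a+2):ℤ)) * (k0:ℤ) ≤
      (2000*(((a:ℤ)+1)*m+M)*(dnat (a+2):ℤ)) * (k:ℤ) :=
    mul_le_mul_of_nonneg_left hk0k (by positivity)
  linarith only [hle, t1, t2]

theorem stmt_3 :
    ¬ ∃ (k m M r : ℕ), 0 < k ∧ 0 < m ∧ 0 < M ∧ 0 < r ∧ 2 ≤ r ∧ k ≤ 49 ∧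
      1 < M ∧ M < m ∧ ¬ IsSquare r ∧
      ((r : ℤ) - 1) * m ^ 2 + M ^ 2 - M + 2 - k ^ 2 ≤ 0 ∧
      (k : ℝ) / ((r - 1) * m + M) < 1 / (Real.sqrt r + delta r) := by
  rintro ⟨k, m, M, r, hk0, hm0, hM0, hr0, hr2, hk49, hM1, hMm, -, hZ, hR⟩
  -- ℤ hypothesis to ℕ
  have hMM : M ≤ M*M := Nat.le_mul_of_pos_left M (by omega)
  have h1r : 1 ≤ r := by omega
  have hMle : M ≤ (r-1)*(m*m) + M*M := le_trans hMM (Nat.le_add_left _ _)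
  have hnat : (r-1)*(m*m) + M*M - M + 2 ≤ k*k := by
    zify [h1r, hMle]
    nlinarith [hZ]
  have HN := main_nat r m M k hr2 (by omega) hMm hk49 hnat
  -- real side
  have hrR : (2:ℝ) ≤ (r:ℝ) := by exact_mod_cast hr2
  have hmR : (1:ℝ) ≤ (m:ℝ) := by exact_mod_cast hm0
  have hMR : (2:ℝ) ≤ (M:ℝ) := by exact_mod_cast hM1
  have hApos : (0:ℝ) < ((r:ℝ) - 1) * m + M := by nlinarith
  have hden : (0:ℝ) < Real.sqrt r + delta r :=
    add_pos_of_nonneg_of_pos (Real.sqrt_nonneg _) (delta_pos r)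
  rw [div_lt_div_iff₀ hApos hden] at hR
  have hR2 : (k:ℝ) * Real.sqrt r + k * delta r < ((r:ℝ) - 1) * m + M := by
    have e : (k:ℝ) * (Real.sqrt r + delta r) = k * Real.sqrt r + k * delta r := by ring
    linarith [hR, e.symm.le]
  have hknn : (0:ℝ) ≤ (k:ℝ) * Real.sqrt r := by positivity
  have hlt : (k:ℝ) * Real.sqrt r < ((r:ℝ) - 1) * m + M - k * delta r := by linarith
  have hsq : ((k:ℝ) * Real.sqrt r)^2 < (((r:ℝ) - 1) * m + M - k * delta r)^2 := by
    exact pow_lt_pow_left₀ hlt hknn (by norm_num)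
  have hval : ((k:ℝ) * Real.sqrt r)^2 = (k:ℝ)^2 * r := by
    rw [mul_pow, Real.sq_sqrt (by positivity : (0:ℝ) ≤ (r:ℝ))]
  have hdc : (dnat r : ℝ) = 1000 * delta r := dnat_cast r
  -- cast HN to ℝ
  have hAn : (((r-1)*m+M : ℕ) : ℝ) = ((r:ℝ) - 1) * m + M := by
    push_cast [Nat.cast_sub h1r]
    ring
  have HNR : (1000*(((r:ℝ) - 1) * m + M))^2 + ((k:ℝ) * (dnat r : ℝ))^2 ≤
      1000000*(r:ℝ)*(k:ℝ)^2 + 2000*(((r:ℝ) - 1) * m + M)*(k:ℝ)*(dnat r : ℝ) := by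
    have := HN
    zify at this
    push_cast [Nat.cast_sub h1r] at this
    exact_mod_cast this
  have hd2 : delta r = (dnat r : ℝ)/1000 := by rw [hdc]; ring
  rw [hd2, hval] at hsq
  have key : 1000000*((k:ℝ)^2*(r:ℝ)) <
      (1000*(((r:ℝ) - 1) * m + M) - (k:ℝ)*(dnat r : ℝ))^2 := by nlinarith only [hsq]
  have expand : (1000*(((r:ℝ) - 1) * m + M) - (k:ℝ)*(dnat r : ℝ))^2 =
      (1000*(((r:ℝ) - 1) * m + M))^2 - 2000*(((r:ℝ) - 1) * m + M)*(k:ℝ)*(dnat r : ℝ)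
        + ((k:ℝ)*(dnat r : ℝ))^2 := by ring
  rw [expand] at key
  linarith only [key, HNR]
end

section
/- There do not exist positive integers k, m, r with r ≥ 2, k ≤ 49, m ≥ 2, r not a perfect square, such that (r−1)·m² + 3 − m − k² ≤ 0 and k/((r−1)·m + 1) < 1/(√r + δ(r)), with δ(2)=0.031, δ(3)=0.018, δ(5)=0.014, δ(6)=0.022, δ(7)=0.011, δ(8)=0.012, δ(r)=0.013 otherwise. -/
theorem stmt_5 :
    ¬ ∃ (k m r : ℕ), 0 < k ∧ 0 < m ∧ 0 < r ∧ 2 ≤ r ∧ k ≤ 49 ∧ 2 ≤ m ∧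
      ¬ IsSquare r ∧
      ((r : ℤ) - 1) * m ^ 2 + 3 - m - k ^ 2 ≤ 0 ∧
      (k : ℝ) / ((r - 1) * m + 1) < 1 / (Real.sqrt r + delta r) := by
  rintro ⟨k, m, r, hk, hm, hr, hr2, hk49, hm2, -, hint, hlt⟩
  have hr2' : (2 : ℤ) ≤ r := by exact_mod_cast hr2
  have hm2' : (2 : ℤ) ≤ m := by exact_mod_cast hm2
  have key : (((r : ℤ) - 1) * m + 1) ^ 2 + 1 ≤ (k : ℤ) ^ 2 * r := by
    nlinarith [mul_nonneg (sub_nonneg.2 (by linarith : (1:ℤ) ≤ (r:ℤ) - 1))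
        (sq_nonneg ((m : ℤ) - 2)),
      mul_nonneg (by linarith : (0:ℤ) ≤ (r:ℤ) - 2) (by linarith : (0:ℤ) ≤ (m:ℤ) - 1),
      mul_nonneg (by linarith : (0:ℤ) ≤ (k:ℤ)^2 - (((r:ℤ)-1)*m^2 - m + 3))
        (by linarith : (0:ℤ) ≤ (r:ℤ))]
  have keyR : (((r : ℝ) - 1) * m + 1) ^ 2 + 1 ≤ (k : ℝ) ^ 2 * r := by exact_mod_cast key
  have hrR : (2 : ℝ) ≤ (r : ℝ) := by exact_mod_cast hr2
  have hmR : (2 : ℝ) ≤ (m : ℝ) := by exact_mod_cast hm2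
  have hkR : (0 : ℝ) < (k : ℝ) := by exact_mod_cast hk
  have hden : (0 : ℝ) < ((r : ℝ) - 1) * m + 1 := by nlinarith
  have hδ : 0 < delta r := by unfold delta; split_ifs <;> norm_num
  have hs0 : (0 : ℝ) ≤ Real.sqrt r := Real.sqrt_nonneg _
  have hsq : Real.sqrt r ^ 2 = (r : ℝ) := Real.sq_sqrt (by positivity)
  have hks : ((r : ℝ) - 1) * m + 1 < k * Real.sqrt r := by
    have h2 : (((r : ℝ) - 1) * m + 1) ^ 2 < ((k : ℝ) * Real.sqrt r) ^ 2 := by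
      rw [mul_pow, hsq]; linarith
    exact lt_of_pow_lt_pow_left₀ 2 (by positivity) h2
  have hpos : (0 : ℝ) < Real.sqrt r + delta r := by linarith
  have h3 : 1 / (Real.sqrt r + delta r) < (k : ℝ) / (((r : ℝ) - 1) * m + 1) := by
    rw [div_lt_div_iff₀ hpos hden]
    nlinarith
  linarith [hlt, h3]
end

section
/- There do not exist positive integers k, m, r with r ≥ 2, k ≤ 49, m ≥ 2, r not a perfect square, such that (r−1) + m² − m + 2 − k² ≤ 0 and k/((r−1) + m) < 1/(√r + δ(r)), with δ(2)=0.031, δ(3)=0.018, δ(5)=0.014, δ(6)=0.022, δ(7)=0.011, δ(8)=0.012, δ(r)=0.013 otherwise. -/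
theorem stmt_6 :
    ¬ ∃ (k m r : ℕ), 0 < k ∧ 0 < m ∧ 0 < r ∧ 2 ≤ r ∧ k ≤ 49 ∧ 2 ≤ m ∧
      ¬ IsSquare r ∧
      ((r : ℤ) - 1) + m ^ 2 - m + 2 - k ^ 2 ≤ 0 ∧
      (k : ℝ) / ((r - 1) + m) < 1 / (Real.sqrt r + delta r) := by
  rintro ⟨k, m, r, hk, hm, hr0, hr2, hk49, hm2, hnsq, hint, hlt⟩
  have hrZ : (2 : ℤ) ≤ r := by exact_mod_cast hr2
  have hmZ : (2 : ℤ) ≤ m := by exact_mod_cast hm2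
  -- integer inequality: (r + m - 1)^2 ≤ k^2 * r
  have hkey : ((r : ℤ) + m - 1) ^ 2 ≤ (k : ℤ) ^ 2 * r := by
    nlinarith [sq_nonneg ((m : ℤ) - 2), sq_nonneg ((m : ℤ) - 1), mul_nonneg (sub_nonneg.2 hrZ) (sq_nonneg ((m : ℤ) - 2))]
  have hkeyR : ((r : ℝ) - 1 + m) ^ 2 ≤ (k : ℝ) ^ 2 * r := by
    have : (((r : ℤ) + m - 1 : ℤ) : ℝ) ^ 2 ≤ (((k : ℤ) : ℝ)) ^ 2 * ((r : ℤ) : ℝ) := by exact_mod_cast hkey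
    push_cast at this
    nlinarith [this]
  have hs : (0 : ℝ) < (r : ℝ) - 1 + m := by
    have : (2 : ℝ) ≤ r := by exact_mod_cast hr2
    have : (2 : ℝ) ≤ m := by exact_mod_cast hm2
    nlinarith [show (2:ℝ) ≤ r by exact_mod_cast hr2]
  have hksqrt : (r : ℝ) - 1 + m ≤ (k : ℝ) * Real.sqrt r := by
    have h1 : (0 : ℝ) ≤ (k : ℝ) * Real.sqrt r :=
      mul_nonneg (Nat.cast_nonneg k) (Real.sqrt_nonneg r)
    have h2 : ((k : ℝ) * Real.sqrt r) ^ 2 = (k : ℝ) ^ 2 * r := by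
      rw [mul_pow, Real.sq_sqrt (by positivity : (0:ℝ) ≤ (r:ℝ))]
    nlinarith [hkeyR, sq_nonneg ((k : ℝ) * Real.sqrt r - ((r : ℝ) - 1 + m))]
  -- from hlt: k * (√r + δ) < r - 1 + m
  have hdpos : 0 < delta r := delta_pos r
  have hden : (0 : ℝ) < Real.sqrt r + delta r := by
    have := Real.sqrt_nonneg (r : ℝ); linarith
  rw [div_lt_div_iff₀ hs hden] at hlt
  have hk1 : (1 : ℝ) ≤ k := by exact_mod_cast hk
  nlinarith [hlt, hksqrt, mul_le_mul_of_nonneg_right hk1 hdpos.le]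
end
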